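/- arXiv:2605.31088 — 8 statements merged into one kernel-verified Lean document; each statement's English description precedes it below -/
import Mathlib

section
/- For all real a ≥ b ≥ 0 and x ≥ 0, 2ax(1 + e^{-x}) - 4b(1 - e^{-x}) ≥ 2ax³/(6 + 4x + x²). -/
/-!
With `t = e^{-x}` and `D = x² + 4x + 6`, clearing the denominator leaves the identity
`D (2ax(1+t) - 4b(1-t)) - 2ax³ = 2a(x+2)(Dt + 2x - 6) + 4(a-b)(1-t)D`.
The last term is nonnegative since `b ≤ a` and `t ≤ 1`, and `Dt + 2x ≥ 6` holds because
`x ↦ D e^{-x} + 2x` is nondecreasing on `[0, ∞)`: its derivative `2 - (x² + 2x + 2)e^{-x}`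
is nonnegative by `1 + x + x²/2 ≤ e^x`.
-/

open Real Set

theorem hasDerivAt_quadratic_mul_exp_neg_add (x : ℝ) :
    HasDerivAt (fun y => (y ^ 2 + 4 * y + 6) * exp (-y) + 2 * y)
      (2 - (x ^ 2 + 2 * x + 2) * exp (-x)) x := by
  have hquad : HasDerivAt (fun y : ℝ => y ^ 2 + 4 * y + 6) (2 * x + 4) x := by
    simpa using ((hasDerivAt_pow 2 x).add ((hasDerivAt_id x).const_mul 4)).add_const 6
  have hexp : HasDerivAt (fun y : ℝ => exp (-y)) (-exp (-x)) x := by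
    simpa using (hasDerivAt_neg x).exp
  exact ((hquad.mul hexp).add ((hasDerivAt_id x).const_mul 2)).congr_deriv (by ring)

theorem quadratic_mul_exp_neg_le_two {x : ℝ} (hx : 0 ≤ x) :
    (x ^ 2 + 2 * x + 2) * exp (-x) ≤ 2 := by
  rw [exp_neg, ← div_eq_mul_inv, div_le_iff₀ (exp_pos x)]
  linarith [quadratic_le_exp_of_nonneg hx]

theorem monotoneOn_quadratic_mul_exp_neg_add :
    MonotoneOn (fun y => (y ^ 2 + 4 * y + 6) * exp (-y) + 2 * y) (Ici 0) := by
  refine monotoneOn_of_hasDerivWithinAt_nonneg (convex_Ici 0) (by fun_prop)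
    (fun x _ => (hasDerivAt_quadratic_mul_exp_neg_add x).hasDerivWithinAt) fun x hx => ?_
  rw [interior_Ici] at hx
  linarith [quadratic_mul_exp_neg_le_two (le_of_lt hx)]

theorem six_le_quadratic_mul_exp_neg_add {x : ℝ} (hx : 0 ≤ x) :
    6 ≤ (x ^ 2 + 4 * x + 6) * exp (-x) + 2 * x := by
  simpa using monotoneOn_quadratic_mul_exp_neg_add self_mem_Ici hx hx

theorem exp_elementary_bounds_four (a b x : ℝ) (hab : b ≤ a) (hb : 0 ≤ b) (hx : 0 ≤ x) :
    2 * a * x ^ 3 / (6 + 4 * x + x ^ 2) ≤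
      2 * a * x * (1 + Real.exp (-x)) - 4 * b * (1 - Real.exp (-x)) := by
  have hD : 0 < 6 + 4 * x + x ^ 2 := by positivity
  have hkey := six_le_quadratic_mul_exp_neg_add hx
  have ht : exp (-x) ≤ 1 := exp_le_one_iff.mpr (by linarith)
  have ha : 0 ≤ a := hb.trans hab
  rw [div_le_iff₀ hD]
  nlinarith [mul_nonneg (mul_nonneg ha (by linarith : 0 ≤ x + 2)) (sub_nonneg.mpr hkey),
    mul_nonneg (mul_nonneg (sub_nonneg.mpr hab) (sub_nonneg.mpr ht)) hD.le]
end

section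
/- For all real a ≥ b ≥ 0 and x ≥ 0, 2ax - 4b(1 - e^{-x}) + b(1 - e^{-2x}) ≤ 2(a - b)x + (4/3)bx³. -/
/-!
With `u = 1 - e^{-x}` the terms in `a` cancel and the inequality becomes
`b (2(x - u) - u²) ≤ (4/3) b x³`.
The second-order bounds `x - x²/2 ≤ u ≤ x` give `2(x - u) ≤ x²` and `x² - u² ≤ x³`.
-/

open Real

lemma exp_neg_le_one_sub_add_sq_div_two {x : ℝ} (hx : 0 ≤ x) :
    exp (-x) ≤ 1 - x + x ^ 2 / 2 := by
  have hq : 1 + x + x ^ 2 / 2 ≤ exp x := quadratic_le_exp_of_nonneg hx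
  have hq_pos : 0 < 1 + x + x ^ 2 / 2 := by positivity
  refine le_of_mul_le_mul_right ?_ hq_pos
  calc exp (-x) * (1 + x + x ^ 2 / 2)
      ≤ exp (-x) * exp x := by gcongr
    _ = 1 := by rw [← exp_add, neg_add_cancel, exp_zero]
    -- `(1 - x + x²/2)(1 + x + x²/2) = (1 + x²/2)² - x² = 1 + x⁴/4`
    _ ≤ (1 - x + x ^ 2 / 2) * (1 + x + x ^ 2 / 2) := by nlinarith [pow_nonneg hx 4]

lemma two_mul_sub_four_mul_one_sub_exp_neg_add_one_sub_exp_neg_two_mul_le {x : ℝ} (hx : 0 ≤ x) :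
    2 * x - 4 * (1 - exp (-x)) + (1 - exp (-2 * x)) ≤ (4 / 3) * x ^ 3 := by
  have h_sq : exp (-2 * x) = exp (-x) ^ 2 := by rw [← exp_nat_mul]; ring_nf
  have h_lower : 1 - x ≤ exp (-x) := one_sub_le_exp_neg x
  have h_upper : exp (-x) ≤ 1 - x + x ^ 2 / 2 := exp_neg_le_one_sub_add_sq_div_two hx
  rw [h_sq]
  nlinarith [mul_nonneg hx (sub_nonneg.2 h_upper), sq_nonneg (exp (-x) - 1 + x), pow_nonneg hx 3]

theorem exp_elementary_bounds_five_general (a b x : ℝ) (hb : 0 ≤ b) (hx : 0 ≤ x) :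
    2 * a * x - 4 * b * (1 - Real.exp (-x)) + b * (1 - Real.exp (-2 * x)) ≤
      2 * (a - b) * x + (4 / 3) * b * x ^ 3 := by
  have key := two_mul_sub_four_mul_one_sub_exp_neg_add_one_sub_exp_neg_two_mul_le hx
  linear_combination mul_le_mul_of_nonneg_left key hb

theorem exp_elementary_bounds_five (a b x : ℝ) (hab : b ≤ a) (hb : 0 ≤ b) (hx : 0 ≤ x) :
    2 * a * x - 4 * b * (1 - Real.exp (-x)) + b * (1 - Real.exp (-2 * x)) ≤
      2 * (a - b) * x + (4 / 3) * b * x ^ 3 :=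
  exp_elementary_bounds_five_general a b x hb hx
end

section
/- For all real a ≥ b ≥ 0 and x ≥ 0, 2ax - 2b(1 - e^{-x}) - b(1 - e^{-x})² ≥ (24ax³ + 13ax⁴ + 2ax⁵)/(6 + 4x + x²)². -/
/-! With `u = 1 - e^{-x}` the right-hand side is `2ax - b(2u + u²)`. The (2,2) Padé bound
`e^{-x} ≥ (6 - 2x)/(6 + 4x + x²)` gives `0 ≤ u ≤ v := (x² + 6x)/(6 + 4x + x²)`, so, as `b ≤ a`,
the right-hand side is at least `2ax - a(2v + v²)`, which is exactly the left-hand side.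
The Padé bound holds because `(6 + 4x + x²)e^{-x} + 2x` is nondecreasing on `[0, ∞)`: its derivative
`2 - (2 + 2x + x²)e^{-x}` is nonnegative by `e^x ≥ 1 + x + x²/2`. -/

open Real

lemma hasDerivAt_pade_defect (y : ℝ) :
    HasDerivAt (fun y ↦ (6 + 4 * y + y ^ 2) * exp (-y) + 2 * y)
      (2 - (2 + 2 * y + y ^ 2) * exp (-y)) y := by
  have hpoly : HasDerivAt (fun y : ℝ ↦ 6 + 4 * y + y ^ 2) (4 + 2 * y) y := by
    simpa using (((hasDerivAt_id' y).const_mul 4).const_add 6).fun_add (hasDerivAt_pow 2 y)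
  have hexp : HasDerivAt (fun y ↦ exp (-y)) (-exp (-y)) y := by
    simpa using (hasDerivAt_neg y).exp
  exact ((hpoly.fun_mul hexp).fun_add ((hasDerivAt_id' y).const_mul 2)).congr_deriv (by ring)

lemma six_sub_two_mul_le_mul_exp_neg {x : ℝ} (hx : 0 ≤ x) :
    6 - 2 * x ≤ (6 + 4 * x + x ^ 2) * exp (-x) := by
  have hmono : MonotoneOn (fun y ↦ (6 + 4 * y + y ^ 2) * exp (-y) + 2 * y) (Set.Ici 0) := by
    refine monotoneOn_of_hasDerivWithinAt_nonneg (convex_Ici 0) (by fun_prop)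
      (fun y _ ↦ (hasDerivAt_pade_defect y).hasDerivWithinAt) fun y hy ↦ ?_
    rw [interior_Ici, Set.mem_Ioi] at hy
    have htaylor : 2 + 2 * y + y ^ 2 ≤ 2 * exp y := by linarith [quadratic_le_exp_of_nonneg hy.le]
    have : (2 + 2 * y + y ^ 2) * exp (-y) ≤ 2 :=
      calc (2 + 2 * y + y ^ 2) * exp (-y) ≤ 2 * exp y * exp (-y) := by gcongr
        _ = 2 := by rw [mul_assoc, ← exp_add, add_neg_cancel, exp_zero, mul_one]
    linarith
  have h0 := hmono Set.self_mem_Ici hx hx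
  norm_num at h0
  linarith

lemma one_sub_exp_neg_le_pade {x : ℝ} (hx : 0 ≤ x) :
    1 - exp (-x) ≤ (x ^ 2 + 6 * x) / (6 + 4 * x + x ^ 2) := by
  rw [le_div_iff₀ (by positivity)]
  linarith [six_sub_two_mul_le_mul_exp_neg hx]

theorem exp_elementary_bounds_six (a b x : ℝ) (hab : b ≤ a) (hb : 0 ≤ b) (hx : 0 ≤ x) :
    (24 * a * x ^ 3 + 13 * a * x ^ 4 + 2 * a * x ^ 5) / (6 + 4 * x + x ^ 2) ^ 2 ≤
      2 * a * x - 2 * b * (1 - Real.exp (-x)) - b * (1 - Real.exp (-x)) ^ 2 := by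
  set u := 1 - exp (-x)
  set v := (x ^ 2 + 6 * x) / (6 + 4 * x + x ^ 2)
  have hu : 0 ≤ u := sub_nonneg.2 (exp_le_one_iff.2 (neg_nonpos.2 hx))
  have huv : u ≤ v := one_sub_exp_neg_le_pade hx
  have hlhs : (24 * a * x ^ 3 + 13 * a * x ^ 4 + 2 * a * x ^ 5) / (6 + 4 * x + x ^ 2) ^ 2 =
      2 * a * x - a * (2 * v + v ^ 2) := by
    simp only [v]
    field_simp
    ring
  have hmul : b * (2 * u + u ^ 2) ≤ a * (2 * v + v ^ 2) := by
    have : 0 ≤ a := hb.trans hab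
    gcongr
  linarith
end

section
/- Let μ, μ̃ ∈ ℝ^d, let Σ ∈ ℝ^{d×d} be symmetric positive definite, and let B be any invertible matrix with BBᵀ = Σ. Then the total variation distance between the Gaussian measures N(μ, Σ) and N(μ̃, Σ) equals 2Φ(|B^{-1}(μ̃ - μ)|/2) - 1, where Φ is the standard normal CDF and |·| is the Euclidean norm. -/
open MeasureTheory Matrix

noncomputable def tvDist {X : Type*} [MeasurableSpace X] (ν ν' : Measure X) : ℝ :=
  ⨆ A : {s : Set X // MeasurableSet s}, |(ν A.1).toReal - (ν' A.1).toReal|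

noncomputable def gaussianMeasure {d : ℕ} (μ : EuclideanSpace ℝ (Fin d))
    (S : Matrix (Fin d) (Fin d) ℝ) : Measure (EuclideanSpace ℝ (Fin d)) :=
  volume.withDensity fun z =>
    ENNReal.ofReal (((2 * Real.pi) ^ d * S.det) ^ (-(1 : ℝ) / 2) *
      Real.exp (-(1 / 2) *
        dotProduct (S⁻¹.mulVec fun i => z i - μ i) fun i => z i - μ i))

noncomputable def stdGaussCDF (x : ℝ) : ℝ :=
  ∫ y in Set.Iic x, (Real.sqrt (2 * Real.pi))⁻¹ * Real.exp (-y ^ 2 / 2)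

/-!
The affine bijection `y ↦ μ + B y` pushes `N(0, I)` to `N(μ, Σ)` and `N(m, I)` to `N(μ̃, Σ)`,
where `m = B⁻¹ (μ̃ - μ)`, and total variation is invariant under it; so it suffices to compare
`N(0, I)` with `N(m, I)`. Their densities cross on the hyperplane `⟪m, x⟫ = ‖m‖² / 2`, hence
(Scheffé) the distance is the difference of the masses of the half-space `⟪m, x⟫ ≤ ‖m‖² / 2`.
Since `x ↦ ⟪m, x⟫ / ‖m‖` is standard normal under a standard Gaussian, these masses are
`Φ(‖m‖ / 2)` and `Φ(-‖m‖ / 2) = 1 - Φ(‖m‖ / 2)`.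
-/

open Set WithLp ProbabilityTheory
open scoped RealInnerProductSpace

section TotalVariation

variable {X Y : Type*} [MeasurableSpace X] [MeasurableSpace Y]

lemma tvDist_self (ν : Measure X) : tvDist ν ν = 0 := by
  simp [tvDist]

lemma tvDist_map_of_measurableEmbedding {f : X → Y} (hf : MeasurableEmbedding f)
    (ν ν' : Measure X) : tvDist (ν.map f) (ν'.map f) = tvDist ν ν' := by
  unfold tvDist iSup
  congr 1
  ext r
  constructor
  · rintro ⟨A, rfl⟩
    exact ⟨⟨f ⁻¹' A.1, hf.measurable A.2⟩, by simp only [hf.map_apply]⟩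
  · rintro ⟨s, rfl⟩
    refine ⟨⟨f '' s.1, hf.measurableSet_image' s.2⟩, ?_⟩
    simp only [hf.map_apply, preimage_image_eq _ hf.injective]

lemma measureReal_le_of_restrict_le {ν ν' : Measure X} [IsFiniteMeasure ν'] {A s : Set X}
    (h : ν.restrict A ≤ ν'.restrict A) (hs : s ⊆ A) : ν.real s ≤ ν'.real s := by
  have := Measure.le_iff'.1 h s
  rw [Measure.restrict_eq_self _ hs, Measure.restrict_eq_self _ hs] at this
  exact ENNReal.toReal_mono (measure_ne_top ν' s) this

lemma measureReal_sub_le_of_restrict_le {ν ν' : Measure X} [IsFiniteMeasure ν]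
    [IsFiniteMeasure ν'] {A s : Set X} (hA : MeasurableSet A) (hs : MeasurableSet s)
    (hA_le : ν'.restrict A ≤ ν.restrict A) (hAc_le : ν.restrict Aᶜ ≤ ν'.restrict Aᶜ) :
    ν.real s - ν'.real s ≤ ν.real A - ν'.real A := by
  have h_out := measureReal_le_of_restrict_le hAc_le (sdiff_subset_compl s A)
  have h_in := measureReal_le_of_restrict_le hA_le (sdiff_subset (s := A) (t := s))
  have h_split_s := measureReal_inter_add_sdiff (μ := ν) (s := s) hA
  have h_split_s' := measureReal_inter_add_sdiff (μ := ν') (s := s) hA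
  have h_split_A := measureReal_inter_add_sdiff (μ := ν) (s := A) hs
  have h_split_A' := measureReal_inter_add_sdiff (μ := ν') (s := A) hs
  rw [inter_comm A s] at h_split_A h_split_A'
  linarith

lemma tvDist_eq_of_restrict_le {ν ν' : Measure X} [IsFiniteMeasure ν] [IsFiniteMeasure ν']
    (h_univ : ν univ = ν' univ) {A : Set X} (hA : MeasurableSet A)
    (hA_le : ν'.restrict A ≤ ν.restrict A) (hAc_le : ν.restrict Aᶜ ≤ ν'.restrict Aᶜ) :
    tvDist ν ν' = ν.real A - ν'.real A := by
  have h_compl : ν'.real Aᶜ - ν.real Aᶜ = ν.real A - ν'.real A := by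
    simp only [measureReal_compl hA, measureReal_def, h_univ]
    ring
  have h_bound (s : {s : Set X // MeasurableSet s}) :
      |ν.real s.1 - ν'.real s.1| ≤ ν.real A - ν'.real A := by
    refine abs_sub_le_iff.2 ⟨measureReal_sub_le_of_restrict_le hA s.2 hA_le hAc_le, ?_⟩
    rw [← h_compl]
    exact measureReal_sub_le_of_restrict_le hA.compl s.2 hAc_le (by rwa [compl_compl])
  exact le_antisymm (ciSup_le h_bound)
    (le_ciSup_of_le ⟨_, forall_mem_range.2 h_bound⟩ ⟨A, hA⟩ (le_abs_self _))

lemma withDensity_restrict_le_of_forall_le {μ : Measure X} {f g : X → ENNReal} {s : Set X}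
    (hs : MeasurableSet s) (h : ∀ x ∈ s, f x ≤ g x) :
    (μ.withDensity f).restrict s ≤ (μ.withDensity g).restrict s := by
  rw [restrict_withDensity hs, restrict_withDensity hs]
  exact withDensity_mono ((ae_restrict_iff' hs).2 (ae_of_all _ h))

end TotalVariation

lemma MeasureTheory.MeasurePreserving.map_withDensity_comp {α β : Type*} [MeasurableSpace α]
    [MeasurableSpace β] {μ : Measure α} {ν : Measure β} {f : α → β} (hf : MeasurePreserving f μ ν)
    (hf_emb : MeasurableEmbedding f) (g : β → ENNReal) :
    (μ.withDensity (g ∘ f)).map f = ν.withDensity g := by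
  ext s hs
  rw [Measure.map_apply hf.measurable hs, withDensity_apply _ (hf.measurable hs),
    withDensity_apply _ hs]
  exact hf.setLIntegral_comp_preimage_emb hf_emb g s

lemma univ_pi_indicator_ofReal_prod {ι : Type*} [Fintype ι] {α : ι → Type*}
    (s : ∀ i, Set (α i)) (f : ∀ i, α i → ℝ) (x : ∀ i, α i) :
    (univ.pi s).indicator (fun x => ENNReal.ofReal (∏ i, f i (x i))) x =
      ENNReal.ofReal (∏ i, (s i).indicator (f i) (x i)) := by
  by_cases hx : x ∈ univ.pi s
  · rw [indicator_of_mem hx]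
    congr 1
    exact Finset.prod_congr rfl fun i _ => (indicator_of_mem (hx i (mem_univ i)) _).symm
  · obtain ⟨i, hi⟩ : ∃ i, x i ∉ s i := by simpa [mem_univ_pi] using hx
    rw [indicator_of_notMem hx, Finset.prod_eq_zero (Finset.mem_univ i) (indicator_of_notMem hi _),
      ENNReal.ofReal_zero]

lemma MeasureTheory.Measure.pi_withDensity_ofReal {ι : Type*} [Fintype ι] {α : ι → Type*}
    [∀ i, MeasurableSpace (α i)] (μ : ∀ i, Measure (α i)) [∀ i, SigmaFinite (μ i)]
    {f : ∀ i, α i → ℝ} (hf : ∀ i, Integrable (f i) (μ i)) (hf_nonneg : ∀ i, 0 ≤ f i) :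
    Measure.pi (fun i => (μ i).withDensity fun x => ENNReal.ofReal (f i x)) =
      (Measure.pi μ).withDensity fun x => ENNReal.ofReal (∏ i, f i (x i)) := by
  have := fun i => isFiniteMeasure_withDensity_ofReal (hf i).2
  refine Measure.pi_eq fun s hs => ?_
  have hs_nonneg i : 0 ≤ (s i).indicator (f i) := indicator_nonneg fun x _ => hf_nonneg i x
  rw [withDensity_apply _ (MeasurableSet.univ_pi hs),
    ← lintegral_indicator (MeasurableSet.univ_pi hs)]
  simp_rw [univ_pi_indicator_ofReal_prod]
  rw [← ofReal_integral_eq_lintegral_ofReal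
      (Integrable.fintype_prod_dep fun i => (hf i).indicator (hs i))
      (ae_of_all _ fun x => Finset.prod_nonneg fun i _ => hs_nonneg i (x i)),
    integral_fintype_prod_eq_prod,
    ENNReal.ofReal_prod_of_nonneg fun i _ => integral_nonneg (hs_nonneg i)]
  refine Finset.prod_congr rfl fun i _ => ?_
  rw [integral_indicator (hs i), ofReal_integral_eq_lintegral_ofReal (hf i).integrableOn
    (ae_of_all _ (hf_nonneg i)), withDensity_apply _ (hs i)]

lemma stdGaussian_setOf_inner_le {E : Type*} [NormedAddCommGroup E] [InnerProductSpace ℝ E]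
    [FiniteDimensional ℝ E] [MeasurableSpace E] [BorelSpace E] {m : E} (hm : m ≠ 0) (t : ℝ) :
    stdGaussian E {x | ⟪m, x⟫ ≤ t} = gaussianReal 0 1 (Iic (t / ‖m‖)) := by
  have hm_pos : 0 < ‖m‖ := norm_pos_iff.2 hm
  set L := innerSL ℝ (‖m‖⁻¹ • m)
  have h_set : {x | ⟪m, x⟫ ≤ t} = L ⁻¹' Iic (t / ‖m‖) := by
    ext x
    simp [L, inv_mul_le_iff₀ hm_pos, mul_div_cancel₀ _ hm_pos.ne']
  have h_norm : ‖L‖ = 1 := by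
    simp [L, norm_smul, hm_pos.ne']
  rw [h_set, ← Measure.map_apply L.continuous.measurable measurableSet_Iic,
    IsGaussian.map_eq_gaussianReal, integral_strongDual_stdGaussian, variance_dual_stdGaussian,
    h_norm]
  simp

lemma stdGaussCDF_eq_measureReal (x : ℝ) : stdGaussCDF x = (gaussianReal 0 1).real (Iic x) := by
  rw [measureReal_def, gaussianReal_apply_eq_integral 0 one_ne_zero, ENNReal.toReal_ofReal
    (setIntegral_nonneg measurableSet_Iic fun y _ => gaussianPDFReal_nonneg 0 1 y)]
  simp [stdGaussCDF, gaussianPDFReal]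

lemma stdGaussCDF_neg (x : ℝ) : stdGaussCDF (-x) = 1 - stdGaussCDF x := by
  have := nullSingletonClass_gaussianReal (μ := 0) (v := 1) one_ne_zero
  rw [stdGaussCDF_eq_measureReal, stdGaussCDF_eq_measureReal]
  conv_lhs => rw [← neg_zero, ← gaussianReal_map_neg]
  rw [map_measureReal_apply measurable_neg measurableSet_Iic, neg_preimage, neg_Iic, neg_neg,
    ← compl_Iio, probReal_compl_eq_one_sub measurableSet_Iio, measureReal_congr Iio_ae_eq_Iic]

section Gaussian

variable {d : ℕ}

noncomputable def gaussianDensity (μ : EuclideanSpace ℝ (Fin d)) (S : Matrix (Fin d) (Fin d) ℝ)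
    (z : EuclideanSpace ℝ (Fin d)) : ℝ :=
  ((2 * Real.pi) ^ d * S.det) ^ (-(1 : ℝ) / 2) *
    Real.exp (-(1 / 2) * dotProduct (S⁻¹.mulVec fun i => z i - μ i) fun i => z i - μ i)

noncomputable def stdGaussianDensity (y : EuclideanSpace ℝ (Fin d)) : ℝ :=
  (√(2 * Real.pi))⁻¹ ^ d * Real.exp (-‖y‖ ^ 2 / 2)

lemma gaussianMeasure_eq_withDensity (μ : EuclideanSpace ℝ (Fin d))
    (S : Matrix (Fin d) (Fin d) ℝ) :
    gaussianMeasure μ S = volume.withDensity fun z => ENNReal.ofReal (gaussianDensity μ S z) :=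
  rfl

lemma inv_mulVec_dotProduct_eq_norm_sq {S B : Matrix (Fin d) (Fin d) ℝ} (hBS : B * Bᵀ = S)
    (v : Fin d → ℝ) : (S⁻¹ *ᵥ v) ⬝ᵥ v = ‖toLp 2 (B⁻¹ *ᵥ v)‖ ^ 2 := by
  rw [← hBS, Matrix.mul_inv_rev, ← transpose_nonsing_inv, ← mulVec_mulVec, mulVec_transpose,
    ← dotProduct_mulVec, EuclideanSpace.real_norm_sq_eq]
  simp [dotProduct, sq]

lemma two_pi_pow_mul_det_rpow_neg_half {S B : Matrix (Fin d) (Fin d) ℝ} (hBS : B * Bᵀ = S) :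
    ((2 * Real.pi) ^ d * S.det) ^ (-(1 : ℝ) / 2) = |B.det|⁻¹ * (√(2 * Real.pi))⁻¹ ^ d := by
  have h_det : S.det = |B.det| ^ 2 := by
    rw [← hBS, det_mul, det_transpose, sq_abs, sq]
  have h_sq : (2 * Real.pi) ^ d * |B.det| ^ 2 = ((√(2 * Real.pi)) ^ d * |B.det|) ^ 2 := by
    rw [mul_pow (√(2 * Real.pi) ^ d), ← pow_mul, mul_comm d, pow_mul,
      Real.sq_sqrt (by positivity)]
  rw [h_det, h_sq, ← Real.rpow_natCast, ← Real.rpow_mul (by positivity),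
    show ((2 : ℕ) : ℝ) * (-(1 : ℝ) / 2) = -1 by norm_num, Real.rpow_neg_one, mul_inv, inv_pow,
    mul_comm]

lemma gaussianDensity_eq {S B : Matrix (Fin d) (Fin d) ℝ} (hBS : B * Bᵀ = S)
    (μ z : EuclideanSpace ℝ (Fin d)) :
    gaussianDensity μ S z =
      |B.det|⁻¹ * stdGaussianDensity (toEuclideanCLM (𝕜 := ℝ) B⁻¹ (z - μ)) := by
  rw [gaussianDensity, stdGaussianDensity, two_pi_pow_mul_det_rpow_neg_half hBS,
    inv_mulVec_dotProduct_eq_norm_sq hBS]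
  have h_arg : toEuclideanCLM (𝕜 := ℝ) B⁻¹ (z - μ) = toLp 2 (B⁻¹ *ᵥ fun i => z i - μ i) := rfl
  rw [h_arg]
  ring_nf

lemma gaussianDensity_one (m z : EuclideanSpace ℝ (Fin d)) :
    gaussianDensity m 1 z = stdGaussianDensity (z - m) := by
  simp [gaussianDensity_eq (S := 1) (B := 1) (by simp)]

lemma det_toEuclideanCLM (B : Matrix (Fin d) (Fin d) ℝ) :
    (toEuclideanCLM (𝕜 := ℝ) B).det = B.det := by
  rw [ContinuousLinearMap.det, coe_toEuclideanCLM_eq_toEuclideanLin]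
  exact LinearMap.det_toLin (PiLp.basisFun 2 ℝ (Fin d)) B

lemma toEuclideanCLM_inv_apply_apply {B : Matrix (Fin d) (Fin d) ℝ} (hB : IsUnit B.det)
    (y : EuclideanSpace ℝ (Fin d)) :
    toEuclideanCLM (𝕜 := ℝ) B⁻¹ (toEuclideanCLM (𝕜 := ℝ) B y) = y := by
  ext i
  simp [mulVec_mulVec, nonsing_inv_mul B hB]

lemma toEuclideanCLM_apply_inv_apply {B : Matrix (Fin d) (Fin d) ℝ} (hB : IsUnit B.det)
    (y : EuclideanSpace ℝ (Fin d)) :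
    toEuclideanCLM (𝕜 := ℝ) B (toEuclideanCLM (𝕜 := ℝ) B⁻¹ y) = y := by
  ext i
  simp [mulVec_mulVec, mul_nonsing_inv B hB]

lemma measurableEmbedding_const_add_toEuclideanCLM {B : Matrix (Fin d) (Fin d) ℝ}
    (hB : IsUnit B.det) (μ : EuclideanSpace ℝ (Fin d)) :
    MeasurableEmbedding fun y => μ + toEuclideanCLM (𝕜 := ℝ) B y := by
  refine Measurable.measurableEmbedding (by fun_prop) fun y y' h => ?_
  rw [← toEuclideanCLM_inv_apply_apply hB y, ← toEuclideanCLM_inv_apply_apply hB y',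
    add_left_cancel h]

lemma gaussianMeasure_eq_map {S B : Matrix (Fin d) (Fin d) ℝ} (hB : IsUnit B.det)
    (hBS : B * Bᵀ = S) (μ : EuclideanSpace ℝ (Fin d)) :
    gaussianMeasure μ S = (gaussianMeasure 0 1).map fun y => μ + toEuclideanCLM (𝕜 := ℝ) B y := by
  set f := fun y => μ + toEuclideanCLM (𝕜 := ℝ) B y
  have hf := measurableEmbedding_const_add_toEuclideanCLM hB μ
  have hf_surj : Function.Surjective f := fun z =>
    ⟨toEuclideanCLM (𝕜 := ℝ) B⁻¹ (z - μ), by simp [f, toEuclideanCLM_apply_inv_apply hB]⟩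
  have hf_deriv y : HasFDerivAt f (toEuclideanCLM (𝕜 := ℝ) B) y :=
    (toEuclideanCLM (𝕜 := ℝ) B).hasFDerivAt.const_add μ
  ext s hs
  rw [hf.map_apply, gaussianMeasure_eq_withDensity, gaussianMeasure_eq_withDensity,
    withDensity_apply _ hs, withDensity_apply _ (hs.preimage hf.measurable),
    ← image_preimage_eq s hf_surj, lintegral_image_eq_lintegral_abs_det_fderiv_mul volume
      (hs.preimage hf.measurable) (fun y _ => (hf_deriv y).hasFDerivWithinAt) hf.injective.injOn,
    preimage_image_eq _ hf.injective]
  refine lintegral_congr fun y => ?_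
  rw [det_toEuclideanCLM, ← ENNReal.ofReal_mul (abs_nonneg _), gaussianDensity_eq hBS,
    gaussianDensity_one, ← mul_assoc, mul_inv_cancel₀ (abs_ne_zero.2 hB.ne_zero), one_mul]
  simp [f, toEuclideanCLM_inv_apply_apply hB]

lemma gaussianMeasure_one_eq_map (c : EuclideanSpace ℝ (Fin d)) :
    gaussianMeasure c 1 = (gaussianMeasure 0 1).map (c + ·) := by
  simpa using gaussianMeasure_eq_map (S := 1) (B := 1) (by simp) (by simp) c

lemma prod_gaussianPDFReal_zero_one (x : Fin d → ℝ) :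
    ∏ i, gaussianPDFReal 0 1 (x i) = stdGaussianDensity (toLp 2 x) := by
  rw [stdGaussianDensity, EuclideanSpace.real_norm_sq_eq]
  simp only [gaussianPDFReal, Finset.prod_mul_distrib, Finset.prod_const, Finset.card_univ,
    Fintype.card_fin, ← Real.exp_sum]
  congr 2
  · simp
  · rw [neg_div, Finset.sum_div, ← Finset.sum_neg_distrib]
    simp [neg_div]

lemma gaussianMeasure_zero_one :
    gaussianMeasure (0 : EuclideanSpace ℝ (Fin d)) 1 = stdGaussian (EuclideanSpace ℝ (Fin d)) := by
  rw [← map_pi_eq_stdGaussian, gaussianReal_of_var_ne_zero 0 one_ne_zero, gaussianPDF_def,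
    Measure.pi_withDensity_ofReal _ (fun _ => integrable_gaussianPDFReal 0 1)
      (fun _ => gaussianPDFReal_nonneg 0 1), ← volume_pi]
  simp_rw [prod_gaussianPDFReal_zero_one]
  refine Eq.symm (((PiLp.volume_preserving_toLp (Fin d)).map_withDensity_comp
    (MeasurableEquiv.toLp 2 (Fin d → ℝ)).measurableEmbedding
    fun y => ENNReal.ofReal (stdGaussianDensity y)).trans ?_)
  simp_rw [gaussianMeasure_eq_withDensity, gaussianDensity_one, sub_zero]

instance isProbabilityMeasure_gaussianMeasure_one (c : EuclideanSpace ℝ (Fin d)) :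
    IsProbabilityMeasure (gaussianMeasure c 1) := by
  rw [gaussianMeasure_one_eq_map, gaussianMeasure_zero_one]
  exact Measure.isProbabilityMeasure_map (by fun_prop)

lemma stdGaussianDensity_le_iff (x y : EuclideanSpace ℝ (Fin d)) :
    stdGaussianDensity x ≤ stdGaussianDensity y ↔ ‖y‖ ≤ ‖x‖ := by
  rw [stdGaussianDensity, stdGaussianDensity, mul_le_mul_iff_right₀ (by positivity),
    Real.exp_le_exp, div_le_div_iff_of_pos_right two_pos, neg_le_neg_iff,
    pow_le_pow_iff_left₀ (norm_nonneg _) (norm_nonneg _) two_ne_zero]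

lemma gaussianDensity_one_le_iff (m x : EuclideanSpace ℝ (Fin d)) :
    gaussianDensity m 1 x ≤ gaussianDensity 0 1 x ↔ ⟪m, x⟫ ≤ ‖m‖ ^ 2 / 2 := by
  rw [gaussianDensity_one, gaussianDensity_one, sub_zero, stdGaussianDensity_le_iff,
    ← pow_le_pow_iff_left₀ (norm_nonneg _) (norm_nonneg _) two_ne_zero, norm_sub_sq_real,
    real_inner_comm]
  constructor <;> intro h <;> linarith

lemma gaussianMeasure_one_setOf_inner_le {m : EuclideanSpace ℝ (Fin d)} (hm : m ≠ 0)
    (c : EuclideanSpace ℝ (Fin d)) (t : ℝ) :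
    (gaussianMeasure c 1).real {x | ⟪m, x⟫ ≤ t} = stdGaussCDF ((t - ⟪m, c⟫) / ‖m‖) := by
  have h_pre : (c + ·) ⁻¹' {x | ⟪m, x⟫ ≤ t} = {y | ⟪m, y⟫ ≤ t - ⟪m, c⟫} := by
    ext y
    simp [inner_add_right, le_sub_iff_add_le']
  rw [gaussianMeasure_one_eq_map, map_measureReal_apply (measurable_const_add c)
      (measurableSet_le (by fun_prop) measurable_const), h_pre, gaussianMeasure_zero_one,
    measureReal_def, stdGaussian_setOf_inner_le hm, stdGaussCDF_eq_measureReal, measureReal_def]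

lemma tvDist_gaussianMeasure_one (m : EuclideanSpace ℝ (Fin d)) :
    tvDist (gaussianMeasure 0 1) (gaussianMeasure m 1) = 2 * stdGaussCDF (‖m‖ / 2) - 1 := by
  rcases eq_or_ne m 0 with rfl | hm
  · have := stdGaussCDF_neg 0
    rw [neg_zero] at this
    rw [tvDist_self, norm_zero, zero_div]
    linarith
  set A := {x : EuclideanSpace ℝ (Fin d) | ⟪m, x⟫ ≤ ‖m‖ ^ 2 / 2}
  have hA : MeasurableSet A := measurableSet_le (by fun_prop) measurable_const
  have hm_pos : 0 < ‖m‖ := norm_pos_iff.2 hm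
  have h_arg₁ : (‖m‖ ^ 2 / 2 - 0) / ‖m‖ = ‖m‖ / 2 := by field_simp; ring
  have h_arg₂ : (‖m‖ ^ 2 / 2 - ‖m‖ ^ 2) / ‖m‖ = -(‖m‖ / 2) := by field_simp; ring
  rw [tvDist_eq_of_restrict_le (ν := gaussianMeasure 0 1) (ν' := gaussianMeasure m 1) (by simp) hA
      (withDensity_restrict_le_of_forall_le hA fun x hx =>
        ENNReal.ofReal_le_ofReal ((gaussianDensity_one_le_iff m x).2 hx))
      (withDensity_restrict_le_of_forall_le hA.compl fun x hx =>
        ENNReal.ofReal_le_ofReal (not_le.1 (mt (gaussianDensity_one_le_iff m x).1 hx)).le),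
    gaussianMeasure_one_setOf_inner_le hm, gaussianMeasure_one_setOf_inner_le hm,
    inner_zero_right, real_inner_self_eq_norm_sq, h_arg₁, h_arg₂, stdGaussCDF_neg]
  ring

end Gaussian

theorem tv_distance_gaussians_general {d : ℕ} (μ μt : EuclideanSpace ℝ (Fin d))
    (S B : Matrix (Fin d) (Fin d) ℝ) (hB : IsUnit B.det)
    (hBS : B * Bᵀ = S) :
    tvDist (gaussianMeasure μ S) (gaussianMeasure μt S) =
      2 * stdGaussCDF
        (Real.sqrt (∑ i, (B⁻¹.mulVec (fun i => μt i - μ i) i) ^ 2) / 2) - 1 := by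
  set m := toEuclideanCLM (𝕜 := ℝ) B⁻¹ (μt - μ)
  have hf := measurableEmbedding_const_add_toEuclideanCLM hB μ
  have h_shift : gaussianMeasure μt S =
      (gaussianMeasure m 1).map fun y => μ + toEuclideanCLM (𝕜 := ℝ) B y := by
    rw [gaussianMeasure_eq_map hB hBS μt, gaussianMeasure_one_eq_map m,
      Measure.map_map hf.measurable (measurable_const_add m)]
    congr 1
    ext1 y
    simp only [Function.comp_apply, map_add, m, toEuclideanCLM_apply_inv_apply hB]
    abel
  have h_norm : ‖m‖ = √(∑ i, (B⁻¹.mulVec (fun i => μt i - μ i) i) ^ 2) := by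
    simp only [m, EuclideanSpace.norm_eq, Real.norm_eq_abs, sq_abs]
    rfl
  rw [gaussianMeasure_eq_map hB hBS μ, h_shift, tvDist_map_of_measurableEmbedding hf,
    tvDist_gaussianMeasure_one, h_norm]

theorem tv_distance_gaussians {d : ℕ} (μ μt : EuclideanSpace ℝ (Fin d))
    (S B : Matrix (Fin d) (Fin d) ℝ) (hS : S.PosDef) (hB : IsUnit B.det)
    (hBS : B * Bᵀ = S) :
    tvDist (gaussianMeasure μ S) (gaussianMeasure μt S) =
      2 * stdGaussCDF
        (Real.sqrt (∑ i, (B⁻¹.mulVec (fun i => μt i - μ i) i) ^ 2) / 2) - 1 :=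
  tv_distance_gaussians_general μ μt S B hB hBS
end

section
/- Fix γ, h > 0, n ∈ ℕ, set η = e^{-γh}, and for 0 ≤ k ≤ n define α_k = (1 - η²)(1 - η^{2n})k - 2η(1 + η^{n-k})(1 - η^k)(1 - η^n). Then the sequence (α_k)_{0 ≤ k ≤ n} is monotone nondecreasing. -/
theorem alpha_monotone (γ h : ℝ) (hγ : 0 < γ) (hh : 0 < h) (n : ℕ)
    (η : ℝ) (hη : η = Real.exp (-γ * h))
    (α : ℕ → ℝ)
    (hα : ∀ k : ℕ, α k =
      (1 - η ^ 2) * (1 - η ^ (2 * n)) * k -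
        2 * η * (1 + η ^ (n - k)) * (1 - η ^ k) * (1 - η ^ n)) :
    ∀ k : ℕ, k + 1 ≤ n → α k ≤ α (k + 1) := by
  intro k hk
  obtain ⟨m, hm⟩ : ∃ m, n = k + 1 + m := ⟨n - (k + 1), by omega⟩
  have hη0 : 0 < η := hη ▸ Real.exp_pos _
  have hη1 : η < 1 := by
    rw [hη]
    have : -γ * h < 0 := by nlinarith
    calc Real.exp (-γ * h) < Real.exp 0 := Real.exp_lt_exp.mpr this
    _ = 1 := Real.exp_zero
  have e1 : n - k = m + 1 := by omega
  have e2 : n - (k + 1) = m := by omega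
  rw [hα, hα, e1, e2, hm]
  set x := η ^ k with hx
  set y := η ^ m with hy
  have hx0 : 0 ≤ x := by positivity
  have hx1 : x ≤ 1 := pow_le_one₀ hη0.le hη1.le
  have hy0 : 0 ≤ y := by positivity
  have hy1 : y ≤ 1 := pow_le_one₀ hη0.le hη1.le
  have p1 : η ^ (2 * (k + 1 + m)) = x ^ 2 * y ^ 2 * η ^ 2 := by
    rw [hx, hy]; ring
  have p2 : η ^ (k + 1 + m) = x * y * η := by rw [hx, hy]; ring
  have p3 : η ^ (m + 1) = y * η := by rw [hy]; ring
  have p4 : η ^ (k + 1) = x * η := by rw [hx]; ring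
  rw [p1, p2, p3, p4]
  have h1 : 0 ≤ (1 - η) * (1 - x * y * η) := by
    have hxy : x * y ≤ 1 := mul_le_one₀ hx1 hy0 hy1
    have : x * y * η ≤ 1 := mul_le_one₀ hxy hη0.le hη1.le
    nlinarith
  have h2 : 0 ≤ (1 - x) * (1 - y) := by nlinarith
  push_cast
  nlinarith [mul_nonneg h1 h1, mul_nonneg (mul_nonneg hη0.le h1) h2]
end

section
/- Fix γ, h > 0, n ∈ ℕ, set η = e^{-γh}, and for 0 ≤ k ≤ n define β_k = (1 - η²)(η^{-k}(1 - η^k)² n + (1 - η^n)² k) - 2η η^{-k}(1 - η^k)(1 - η^n)(2 - η^k - η^n). Then the sequence (β_k)_{0 ≤ k ≤ n} is monotone nondecreasing, and β_n = η^{-n}(1 - η^n) α_n, where α_n = (1 - η²)(1 - η^{2n})n - 4η(1 - η^n)². -/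
set_option maxHeartbeats 2000000

namespace BetaAux

/-- The key quantity: `β (k+1) - β k = (1-η) * Eaux η n k / η^(k+1)`. -/
noncomputable def Eaux (η : ℝ) (n k : ℕ) : ℝ :=
  (1 - η ^ (2 * k + 1)) * ((1 - η ^ 2) * n - 2 * η * (1 - η ^ n)) -
    η * (1 - η ^ n) ^ 2 * (2 - η ^ k - η ^ (k + 1))

variable {η : ℝ}

lemma pow_le_one' (hη0 : 0 < η) (hη1 : η < 1) (m : ℕ) : η ^ m ≤ 1 :=
  pow_le_one₀ hη0.le hη1.le

/-- `m * η^m * (1-η) ≤ η * (1 - η^m)`. -/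
lemma L2 (hη0 : 0 < η) (hη1 : η < 1) : ∀ m : ℕ, (m : ℝ) * η ^ m * (1 - η) ≤ η * (1 - η ^ m) := by
  intro m
  induction m with
  | zero => simp
  | succ m ih =>
    have hpow : (0:ℝ) ≤ η ^ m := pow_nonneg hη0.le m
    have hp1 : η ^ (m+1) = η ^ m * η := pow_succ η m
    have hpm1 : η ^ m ≤ 1 := pow_le_one' hη0 hη1 m
    have hmul := mul_le_mul_of_nonneg_left ih hη0.le
    have e1 : (m:ℝ) * η ^ (m+1) * (1-η) = η * ((m:ℝ) * η ^ m * (1-η)) := by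
      rw [hp1]; ring
    have e3 : η^2 * (1 - η^m) ≤ η * (1 - η^m) := by
      have : (0:ℝ) ≤ (η - η^2) * (1 - η^m) :=
        mul_nonneg (by nlinarith) (by linarith)
      nlinarith [this]
    have hiden : η * (1 - η^(m+1)) = η * (1 - η^m) + η^(m+1) * (1-η) := by
      rw [hp1]; ring
    have hlhs : ((m:ℝ)+1) * η^(m+1) * (1-η) = (m:ℝ) * η^(m+1) * (1-η) + η^(m+1) * (1-η) := by
      ring
    push_cast
    nlinarith [hmul, e1, e3, hiden, hlhs]

/-- chord bound: `2η(1-η^m) ≤ m (1-η)(η + η^m)`. -/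
lemma chord (hη0 : 0 < η) (hη1 : η < 1) :
    ∀ m : ℕ, 2 * η * (1 - η ^ m) ≤ (m : ℝ) * (1 - η) * (η + η ^ m) := by
  intro m
  induction m with
  | zero => simp
  | succ m ih =>
    have h2 := L2 hη0 hη1 m
    have hp1 : η ^ (m+1) = η ^ m * η := pow_succ η m
    have hpow : (0:ℝ) ≤ η ^ m := pow_nonneg hη0.le m
    have hb : (0:ℝ) ≤ (1-η) * (η * (1 - η^m) - (m:ℝ) * η^m * (1-η)) :=
      mul_nonneg (by linarith) (by linarith)
    have hid2 : ((m:ℝ)+1) * (1-η) * (η + η^(m+1)) =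
        (m:ℝ) * (1-η) * (η + η^m)
        + (1-η) * (η * (1 - η^m) - (m:ℝ) * η^m * (1-η)) + 2 * η * η^m * (1-η) := by
      rw [hp1]; ring
    have hlhs2 : 2 * η * (1 - η^(m+1)) = 2 * η * (1 - η^m) + 2 * η * η^m * (1-η) := by
      rw [hp1]; ring
    push_cast
    linarith [ih, hb, hid2, hlhs2]

/-- `Q n ≥ 0`. -/
lemma Qnonneg (hη0 : 0 < η) (hη1 : η < 1) :
    ∀ n : ℕ, 0 ≤ (1 - η ^ 2) * n - 2 * η * (1 - η ^ n) - η * (1 - η ^ n) ^ 2 := by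
  intro n
  induction n with
  | zero => simp
  | succ n ih =>
    have hp1 : η ^ (n+1) = η ^ n * η := pow_succ η n
    have key : (1 - η ^ 2) * ((n:ℝ)+1) - 2 * η * (1 - η ^ (n+1)) - η * (1 - η ^ (n+1)) ^ 2
        = ((1 - η ^ 2) * n - 2 * η * (1 - η ^ n) - η * (1 - η ^ n) ^ 2)
          + (1 - η) * ((1 - η ^ (n+1)) ^ 2 + η * (1 - η ^ n) ^ 2) := by
      rw [hp1]; ring
    push_cast
    rw [key]
    have h1 : (0:ℝ) ≤ (1 - η) * ((1 - η ^ (n+1)) ^ 2 + η * (1 - η ^ n) ^ 2) := by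
      apply mul_nonneg (by linarith)
      have := sq_nonneg (1 - η ^ (n+1))
      have := sq_nonneg (1 - η ^ n)
      nlinarith
    linarith

/-- terminal value: `Eaux η (m+1) m ≥ 0`. -/
lemma Wnonneg (hη0 : 0 < η) (hη1 : η < 1) (m : ℕ) : 0 ≤ Eaux η (m+1) m := by
  set c : ℝ := η ^ m with hc
  have hc0 : 0 ≤ c := pow_nonneg hη0.le m
  have hc1 : c ≤ 1 := pow_le_one' hη0 hη1 m
  have hp1 : η ^ (m+1) = η * c := by rw [hc, pow_succ]; ring
  have hp2 : η ^ (2*m+1) = η * c ^ 2 := by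
    rw [hc, show 2*m+1 = m+(m+1) by ring, pow_add, pow_succ]; ring
  have hch : 2 * η * (1 - c) ≤ (m : ℝ) * (1 - η) * (η + c) := chord hη0 hη1 m
  have hA : (0:ℝ) ≤ (1 - η * c ^ 2) * (1 - η ^ 2) := by
    apply mul_nonneg <;> nlinarith [sq_nonneg c]
  -- the eleven nonnegative certificate terms
  have h1η : (0:ℝ) ≤ 1 - η := by linarith
  have h1c : (0:ℝ) ≤ 1 - c := by linarith
  have t01 : (0:ℝ) ≤ 3*(1-η)^2*(1-c)^3*η^3 := by positivity
  have t02 : (0:ℝ) ≤ (1-η)^2*(1-c)^3*η^3*c := by positivity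
  have t03 : (0:ℝ) ≤ (1-η)^2*(1-c)^3*η^4 := by positivity
  have t04 : (0:ℝ) ≤ 4*(1-η)^3*(1-c)^2*η^2 := by positivity
  have t05 : (0:ℝ) ≤ 3*(1-η)^3*(1-c)^2*η^3 := by positivity
  have t06 : (0:ℝ) ≤ (1-η)^3*(1-c)^3*η := by positivity
  have t07 : (0:ℝ) ≤ (1-η)^4*(1-c)*η := by positivity
  have t08 : (0:ℝ) ≤ 2*(1-η)^4*(1-c)*η*c := by positivity
  have t09 : (0:ℝ) ≤ 3*(1-η)^4*(1-c)*η^2 := by positivity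
  have t10 : (0:ℝ) ≤ (1-η)^5*c := by positivity
  have t11 : (0:ℝ) ≤ (1-η)^5*η := by positivity
  have hW : Eaux η (m+1) m =
      (1 - η * c ^ 2) * ((1 - η ^ 2) * ((m:ℝ)+1) - 2 * η * (1 - η * c)) -
        η * (1 - η * c) ^ 2 * (2 - c - η * c) := by
    unfold Eaux
    rw [hp1, hp2]
    push_cast
    ring
  have hprod : (0:ℝ) ≤ (1 - η * c ^ 2) * (1 - η ^ 2) *
      ((m : ℝ) * (1 - η) * (η + c) - 2 * η * (1 - c)) :=
    mul_nonneg hA (by linarith)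
  have hkey : (1 - η) * (η + c) * Eaux η (m+1) m =
      (1 - η * c ^ 2) * (1 - η ^ 2) * ((m : ℝ) * (1 - η) * (η + c) - 2 * η * (1 - c)) +
      (3*(1-η)^2*(1-c)^3*η^3 + (1-η)^2*(1-c)^3*η^3*c + (1-η)^2*(1-c)^3*η^4
       + 4*(1-η)^3*(1-c)^2*η^2 + 3*(1-η)^3*(1-c)^2*η^3 + (1-η)^3*(1-c)^3*η
       + (1-η)^4*(1-c)*η + 2*(1-η)^4*(1-c)*η*c + 3*(1-η)^4*(1-c)*η^2
       + (1-η)^5*c + (1-η)^5*η) := by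
    rw [hW]; ring
  have hpos : (0:ℝ) < (1 - η) * (η + c) := by
    apply mul_pos (by linarith) (by linarith)
  have hWnn : (0:ℝ) ≤ (1 - η) * (η + c) * Eaux η (m+1) m := by
    rw [hkey]; linarith
  by_contra hneg
  push_neg at hneg
  nlinarith [hWnn, mul_pos hpos (neg_pos.mpr hneg)]

/-- `M ≥ 0`. -/
lemma Mnonneg (hη0 : 0 < η) (hη1 : η < 1) (n : ℕ) :
    0 ≤ (1 - η ^ 2) * n - 2 * η * (1 - η ^ n) := by
  have := Qnonneg hη0 hη1 n
  nlinarith [sq_nonneg (1 - η ^ n), hη0.le]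

lemma Estep (n k : ℕ) : Eaux η n (k+1) = Eaux η n k +
    η ^ k * (1 - η ^ 2) *
      (η ^ (k+1) * ((1 - η ^ 2) * n - 2 * η * (1 - η ^ n)) - η * (1 - η ^ n) ^ 2) := by
  unfold Eaux
  rw [show 2*(k+1)+1 = (2*k+1)+2 by ring, pow_add, show k+1+1 = (k+1)+1 by rfl,
    pow_succ η (k+1), pow_succ η k]
  ring

/-- upward case: if the slope at `k` is still nonneg, `Eaux ≥ Eaux 0 ≥ 0`. -/
lemma EmonoUp (hη0 : 0 < η) (hη1 : η < 1) (n : ℕ) : ∀ k : ℕ,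
    0 ≤ η ^ (k+1) * ((1 - η ^ 2) * n - 2 * η * (1 - η ^ n)) - η * (1 - η ^ n) ^ 2 →
    0 ≤ Eaux η n k := by
  intro k
  induction k with
  | zero =>
    intro _
    have hQ := Qnonneg hη0 hη1 n
    have h0 : Eaux η n 0 = (1 - η) *
        ((1 - η ^ 2) * n - 2 * η * (1 - η ^ n) - η * (1 - η ^ n) ^ 2) := by
      unfold Eaux; norm_num; ring
    rw [h0]
    exact mul_nonneg (by linarith) hQ
  | succ k ih =>
    intro hg
    have hM := Mnonneg hη0 hη1 n
    have hpk : η ^ (k+2) ≤ η ^ (k+1) :=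
      pow_le_pow_of_le_one hη0.le hη1.le (by omega)
    have hgk : 0 ≤ η ^ (k+1) * ((1 - η ^ 2) * n - 2 * η * (1 - η ^ n))
        - η * (1 - η ^ n) ^ 2 := by
      nlinarith [mul_le_mul_of_nonneg_right hpk hM]
    have hE := ih hgk
    rw [Estep]
    have : 0 ≤ η ^ k * (1 - η ^ 2) *
        (η ^ (k+1) * ((1 - η ^ 2) * n - 2 * η * (1 - η ^ n)) - η * (1 - η ^ n) ^ 2) := by
      apply mul_nonneg (mul_nonneg (pow_nonneg hη0.le k) (by nlinarith)) hgk
    linarith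

/-- downward case: if the slope at `k` is nonpositive, `Eaux` is nonincreasing beyond `k`. -/
lemma EmonoDown (hη0 : 0 < η) (hη1 : η < 1) (n k : ℕ)
    (hg : η ^ (k+1) * ((1 - η ^ 2) * n - 2 * η * (1 - η ^ n)) - η * (1 - η ^ n) ^ 2 ≤ 0) :
    ∀ d : ℕ, Eaux η n (k+d) ≤ Eaux η n k := by
  intro d
  induction d with
  | zero => simp
  | succ d ih =>
    have hM := Mnonneg hη0 hη1 n
    have hpk : η ^ (k+d+1) ≤ η ^ (k+1) :=
      pow_le_pow_of_le_one hη0.le hη1.le (by omega)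
    have hgd : η ^ (k+d+1) * ((1 - η ^ 2) * n - 2 * η * (1 - η ^ n))
        - η * (1 - η ^ n) ^ 2 ≤ 0 := by
      nlinarith [mul_le_mul_of_nonneg_right hpk hM]
    have hstep := Estep (η := η) n (k+d)
    have hterm : η ^ (k+d) * (1 - η ^ 2) *
        (η ^ (k+d+1) * ((1 - η ^ 2) * n - 2 * η * (1 - η ^ n)) - η * (1 - η ^ n) ^ 2) ≤ 0 := by
      apply mul_nonpos_of_nonneg_of_nonpos
        (mul_nonneg (pow_nonneg hη0.le _) (by nlinarith)) hgd
    have hkd : k+(d+1) = (k+d)+1 := by omega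
    rw [hkd, hstep]
    linarith [ih, hterm]

lemma Enonneg (hη0 : 0 < η) (hη1 : η < 1) (n k : ℕ) (hkn : k + 1 ≤ n) :
    0 ≤ Eaux η n k := by
  rcases le_or_gt 0 (η ^ (k+1) * ((1 - η ^ 2) * n - 2 * η * (1 - η ^ n))
      - η * (1 - η ^ n) ^ 2) with hg | hg
  · exact EmonoUp hη0 hη1 n k hg
  · obtain ⟨m, rfl⟩ : ∃ m, n = m + 1 := ⟨n - 1, by omega⟩
    have hkm : k ≤ m := by omega
    have hW := Wnonneg hη0 hη1 m
    have hmono := EmonoDown hη0 hη1 (m+1) k hg.le (m - k)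
    rw [show k + (m - k) = m by omega] at hmono
    linarith

end BetaAux

theorem beta_monotone_and_terminal (γ h : ℝ) (hγ : 0 < γ) (hh : 0 < h) (n : ℕ)
    (η : ℝ) (hη : η = Real.exp (-γ * h))
    (β : ℕ → ℝ)
    (hβ : ∀ k : ℕ, β k =
      (1 - η ^ 2) * ((η ^ k)⁻¹ * (1 - η ^ k) ^ 2 * n + (1 - η ^ n) ^ 2 * k) -
        2 * η * (η ^ k)⁻¹ * (1 - η ^ k) * (1 - η ^ n) * (2 - η ^ k - η ^ n)) :
    (∀ k : ℕ, k + 1 ≤ n → β k ≤ β (k + 1)) ∧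
      β n = (η ^ n)⁻¹ * (1 - η ^ n) *
        ((1 - η ^ 2) * (1 - η ^ (2 * n)) * n - 4 * η * (1 - η ^ n) ^ 2) := by
  have hη0 : 0 < η := by rw [hη]; exact Real.exp_pos _
  have hη1 : η < 1 := by
    rw [hη]
    apply Real.exp_lt_one_iff.mpr
    nlinarith
  constructor
  · intro k hkn
    have hE := BetaAux.Enonneg hη0 hη1 n k hkn
    have hpk : (0:ℝ) < η ^ k := pow_pos hη0 k
    have hpk1 : (0:ℝ) < η ^ (k+1) := pow_pos hη0 (k+1)
    have hsplit : η ^ (2*k+1) = η ^ k * (η ^ k * η) := by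
      rw [show 2*k+1 = k+(k+1) by ring, pow_add, pow_succ]
    have hid : β (k+1) - β k = (1 - η) * BetaAux.Eaux η n k / η ^ (k+1) := by
      rw [hβ k, hβ (k+1)]
      unfold BetaAux.Eaux
      rw [hsplit, pow_succ η k]
      push_cast
      field_simp
      ring
    have : 0 ≤ β (k+1) - β k := by
      rw [hid]
      exact div_nonneg (mul_nonneg (by linarith) hE) hpk1.le
    linarith
  · have hpn : (0:ℝ) < η ^ n := pow_pos hη0 n
    rw [hβ n]
    rw [show 2*n = n+n by ring, pow_add]
    field_simp
    ring
end

section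
/- Let A = [[1, h√η], [0, η]] and L = √(1-η) [[h, 0], [√η, 1]] be 2×2 real matrices with h > 0 and η ∈ (0,1) (here η = e^{-γh}). Then the n-step controllability Gramian Σ_n = Σ_{k=0}^{n-1} Aᵏ L Lᵀ (Aᵀ)ᵏ has entries σ^{xx}_n = h²(1-η)^{-2}[(1-η²)n - 4η(1-η^n) + η(1-η^{2n})], σ^{xv}_n = h√η(1-η)^{-1}(1-η^n)², and σ^{vv}_n = 1 - η^{2n}, and its determinant equals h²(1-η)^{-2}[(1-η²)(1-η^{2n})n - 4η(1-η^n)²]. -/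
open Matrix Finset

/-! With `s = √η`, the Gramian satisfies `Σ_{n+1} = L Lᵀ + A Σ_n Aᵀ`, so it suffices to check
that the claimed closed form satisfies this recursion, which is a rational identity in `s`
and `η = s ^ 2` with denominator a power of `1 - η`. -/

theorem sum_range_succ_pow_mul_mul_pow {R : Type*} [Semiring R] (a q b : R) (n : ℕ) :
    ∑ k ∈ range (n + 1), a ^ k * q * b ^ k = q + a * (∑ k ∈ range n, a ^ k * q * b ^ k) * b := by
  rw [sum_range_succ', mul_sum, sum_mul, pow_zero, pow_zero, one_mul, mul_one, add_comm]
  refine congrArg _ (sum_congr rfl fun k _ => ?_)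
  rw [pow_succ', pow_succ]
  simp only [mul_assoc]

theorem transpose_fin_two_of {α : Type*} (a b c d : α) :
    !![a, b; c, d]ᵀ = !![a, c; b, d] :=
  (transposeᵣ_eq _).symm

theorem mul_transpose_smul_self {m n R : Type*} [Fintype n] [CommSemiring R] (t : R)
    (M : Matrix m n R) :
    (t • M) * (t • M)ᵀ = t ^ 2 • (M * Mᵀ) := by
  rw [transpose_smul, Matrix.smul_mul, Matrix.mul_smul, smul_smul, sq]

noncomputable def obaboSigma (h s η : ℝ) (n : ℕ) : Matrix (Fin 2) (Fin 2) ℝ :=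
  !![h ^ 2 / (1 - η) ^ 2 * ((1 - η ^ 2) * n - 4 * η * (1 - η ^ n) + η * (1 - η ^ (2 * n))),
      h * s / (1 - η) * (1 - η ^ n) ^ 2;
    h * s / (1 - η) * (1 - η ^ n) ^ 2, 1 - η ^ (2 * n)]

theorem gramian_eq_obaboSigma {h s η : ℝ} (hs : s ^ 2 = η) (hη : η ≠ 1) (n : ℕ) :
    ∑ k ∈ range n, !![1, h * s; 0, η] ^ k * ((1 - η) • !![h ^ 2, h * s; h * s, η + 1]) *
      !![1, 0; h * s, η] ^ k = obaboSigma h s η n := by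
  have hη' : 1 - η ≠ 0 := sub_ne_zero.mpr hη.symm
  induction n with
  | zero => ext i j; fin_cases i <;> fin_cases j <;> simp [obaboSigma]
  | succ n ih =>
    rw [sum_range_succ_pow_mul_mul_pow, ih]
    subst hs
    ext i j; fin_cases i <;> fin_cases j <;>
      simp [obaboSigma] <;> field_simp <;> ring

theorem det_obaboSigma {h s η : ℝ} (hs : s ^ 2 = η) (hη : η ≠ 1) (n : ℕ) :
    (obaboSigma h s η n).det = h ^ 2 / (1 - η) ^ 2 *
        ((1 - η ^ 2) * (1 - η ^ (2 * n)) * n - 4 * η * (1 - η ^ n) ^ 2) := by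
  have hη' : 1 - η ≠ 0 := sub_ne_zero.mpr hη.symm
  subst hs
  rw [obaboSigma, det_fin_two_of]
  field_simp
  ring

theorem obabo_gramian_entries (γ h : ℝ) (hγ : 0 < γ) (hh : 0 < h) (n : ℕ)
    (η : ℝ) (hη : η = Real.exp (-γ * h))
    (A L : Matrix (Fin 2) (Fin 2) ℝ)
    (hA : A = !![1, h * Real.sqrt η; 0, η])
    (hL : L = Real.sqrt (1 - η) • !![h, 0; Real.sqrt η, 1])
    (Gram : Matrix (Fin 2) (Fin 2) ℝ)
    (hGram : Gram = ∑ k ∈ Finset.range n, A ^ k * L * Lᵀ * (Aᵀ) ^ k) :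
    Gram 0 0 = h ^ 2 / (1 - η) ^ 2 *
        ((1 - η ^ 2) * n - 4 * η * (1 - η ^ n) + η * (1 - η ^ (2 * n))) ∧
      Gram 0 1 = h * Real.sqrt η / (1 - η) * (1 - η ^ n) ^ 2 ∧
      Gram 1 0 = h * Real.sqrt η / (1 - η) * (1 - η ^ n) ^ 2 ∧
      Gram 1 1 = 1 - η ^ (2 * n) ∧
      Gram.det = h ^ 2 / (1 - η) ^ 2 *
        ((1 - η ^ 2) * (1 - η ^ (2 * n)) * n - 4 * η * (1 - η ^ n) ^ 2) := by
  have hη_pos : 0 < η := hη ▸ Real.exp_pos _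
  have hη_lt_one : η < 1 := by
    rw [hη, Real.exp_lt_one_iff, neg_mul, neg_lt_zero]
    exact mul_pos hγ hh
  set s := Real.sqrt η
  have hs : s ^ 2 = η := Real.sq_sqrt hη_pos.le
  have hAT : Aᵀ = !![1, 0; h * s, η] := by
    rw [hA, transpose_fin_two_of]
  have hLLT : L * Lᵀ = (1 - η) • !![h ^ 2, h * s; h * s, η + 1] := by
    rw [hL, mul_transpose_smul_self, Real.sq_sqrt (by linarith), transpose_fin_two_of,
      mul_fin_two, ← hs]
    ring_nf
  have hGram' : Gram = obaboSigma h s η n := by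
    simp_rw [hGram, Matrix.mul_assoc _ L Lᵀ, hLLT, hAT, hA]
    exact gramian_eq_obaboSigma hs hη_lt_one.ne n
  rw [hGram', det_obaboSigma hs hη_lt_one.ne]
  simp [obaboSigma]
end

section
/- Let d ≥ 1, let A, B ∈ ℝ^{d×d} be invertible, and suppose A B Bᵀ Aᵀ = a² B Bᵀ for some nonzero a ∈ ℝ. Then for every n ≥ 1 and Δz ∈ ℝ^d: (i) the n-step covariance Σ_n = Σ_{k=0}^{n-1} Aᵏ B Bᵀ (Aᵀ)ᵏ equals (Σ_{k=0}^{n-1} a^{2k}) B Bᵀ; (ii) |Σ_n^{-1/2} Aⁿ Δz|² = (Σ_{k=1}^n a^{-2k})^{-1} |B^{-1} Δz|²; (iii) Σ_{k=1}^n |B^{-1} Aᵏ Δz|^{-2} = |B^{-1}Δz|^{-2} Σ_{k=1}^n a^{-2k} (assuming Δz ≠ 0). -/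
/-!
Writing `M = B Bᵀ`, the hypothesis `A M Aᵀ = a² M` iterates to `Aᵏ M (Aᵀ)ᵏ = a²ᵏ M`, which gives
the covariance `Σₙ` as a scalar multiple `c • M`. Since `M` is invertible, the hypothesis is
equivalent to `Aᵀ M⁻¹ A = a² M⁻¹`, i.e. `A` scales the quadratic form `|B⁻¹ w|² = w ⬝ M⁻¹ w` by `a²`.
Every quantity in (ii) and (iii) is this quadratic form evaluated at some `Aᵏ Δz`, because
`|S⁻¹ v|² = v ⬝ (S Sᵀ)⁻¹ v` for any `S`, and the spectral square root of `Σₙ` is symmetric with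
square `Σₙ`. What remains is the geometric sum `∑_{k=1}^n a⁻²ᵏ = a⁻²ⁿ ∑_{k<n} a²ᵏ`.
-/

open Matrix Finset

namespace Matrix

variable {ι R : Type*} [Fintype ι]

theorem sum_sq_mulVec [CommSemiring R] (C : Matrix ι ι R) (v : ι → R) :
    ∑ i, (C *ᵥ v) i ^ 2 = v ⬝ᵥ (Cᵀ * C) *ᵥ v := by
  rw [← mulVec_mulVec, dotProduct_mulVec, vecMul_transpose]
  simp only [dotProduct, sq]

theorem mulVec_dotProduct_mulVec_mulVec [CommSemiring R] (A N : Matrix ι ι R) (v : ι → R) :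
    A *ᵥ v ⬝ᵥ N *ᵥ (A *ᵥ v) = v ⬝ᵥ (Aᵀ * N * A) *ᵥ v := by
  rw [← mulVec_mulVec, ← mulVec_mulVec, dotProduct_mulVec v Aᵀ, vecMul_transpose]

variable [DecidableEq ι]

theorem pow_mul_mul_transpose_pow [CommSemiring R] {A M : Matrix ι ι R} {c : R}
    (h : A * M * Aᵀ = c • M) (k : ℕ) : A ^ k * M * Aᵀ ^ k = c ^ k • M := by
  induction k with
  | zero => simp
  | succ k ih =>
    calc A ^ (k + 1) * M * Aᵀ ^ (k + 1) = A ^ k * (A * M * Aᵀ) * Aᵀ ^ k := by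
          rw [pow_succ A, pow_succ' Aᵀ]; simp only [mul_assoc]
      _ = c ^ (k + 1) • M := by
          rw [h, mul_smul_comm, smul_mul_assoc, ih, smul_smul, pow_succ']

theorem sum_sq_inv_mulVec [CommRing R] {S H : Matrix ι ι R} (h : S * Sᵀ = H) (v : ι → R) :
    ∑ i, (S⁻¹ *ᵥ v) i ^ 2 = v ⬝ᵥ H⁻¹ *ᵥ v := by
  rw [sum_sq_mulVec, ← h, mul_inv_rev, transpose_nonsing_inv]

theorem inv_smul_of_isUnit_det [Field R] {M : Matrix ι ι R} (hM : IsUnit M.det) (c : R) :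
    (c • M)⁻¹ = c⁻¹ • M⁻¹ := by
  rcases eq_or_ne c 0 with rfl | hc
  · simp
  · exact inv_eq_left_inv (by simp [hc, smul_smul, nonsing_inv_mul M hM])

theorem transpose_mul_inv_mul_of_mul_mul_transpose [Field R] {A M : Matrix ι ι R} {c : R}
    (hM : IsUnit M.det) (hc : c ≠ 0) (h : A * M * Aᵀ = c • M) :
    Aᵀ * M⁻¹ * A = c • M⁻¹ := by
  have hright : (M⁻¹ * A * M) * (c⁻¹ • Aᵀ) = 1 := by
    rw [mul_smul_comm, mul_assoc, mul_assoc, ← mul_assoc A, h, mul_smul_comm,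
      nonsing_inv_mul M hM, smul_smul, inv_mul_cancel₀ hc, one_smul]
  calc Aᵀ * M⁻¹ * A = c • ((c⁻¹ • Aᵀ) * (M⁻¹ * A * M) * M⁻¹) := by
        simp [smul_smul, hc, mul_assoc, mul_nonsing_inv M hM]
    _ = c • M⁻¹ := by rw [mul_eq_one_comm.mp hright, one_mul]

theorem PosSemidef.cfc_sqrt_mul_transpose {H : Matrix ι ι ℝ} (hH : H.PosSemidef) :
    cfc Real.sqrt H * (cfc Real.sqrt H)ᵀ = H := by
  have hsymm : (cfc Real.sqrt H)ᵀ = cfc Real.sqrt H := by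
    simpa [IsSelfAdjoint, star_eq_conjTranspose] using
      (cfc_predicate Real.sqrt H : IsSelfAdjoint (cfc Real.sqrt H))
  rw [hsymm, ← cfc_mul Real.sqrt Real.sqrt H, cfc_congr (g := fun x => x)]
  · exact cfc_id' ℝ H hH.1
  · rw [hH.1.spectrum_real_eq_range_eigenvalues]
    rintro - ⟨i, rfl⟩
    exact Real.mul_self_sqrt (hH.eigenvalues_nonneg i)

theorem isUnit_det_mul_transpose [CommRing R] {B : Matrix ι ι R} (hB : IsUnit B.det) :
    IsUnit (B * Bᵀ).det := by
  rw [det_mul, det_transpose]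
  exact hB.mul hB

theorem sum_sq_inv_mulVec_pow_mulVec [Field R] {A B : Matrix ι ι R} {c : R}
    (hB : IsUnit B.det) (hc : c ≠ 0) (h : A * (B * Bᵀ) * Aᵀ = c • (B * Bᵀ)) (k : ℕ)
    (v : ι → R) :
    ∑ i, (B⁻¹ *ᵥ (A ^ k *ᵥ v)) i ^ 2 = c ^ k * ∑ i, (B⁻¹ *ᵥ v) i ^ 2 := by
  have hdual := transpose_mul_inv_mul_of_mul_mul_transpose (isUnit_det_mul_transpose hB) hc h
  have hdual_pow := pow_mul_mul_transpose_pow (A := Aᵀ) (by rwa [transpose_transpose]) k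
  rw [transpose_transpose, ← transpose_pow] at hdual_pow
  rw [sum_sq_inv_mulVec rfl, sum_sq_inv_mulVec rfl, mulVec_dotProduct_mulVec_mulVec, hdual_pow,
    smul_mulVec, dotProduct_smul, smul_eq_mul]

end Matrix

theorem sum_Icc_inv_pow {K : Type*} [Field K] {b : K} (hb : b ≠ 0) (n : ℕ) :
    ∑ k ∈ Icc 1 n, (b ^ k)⁻¹ = (∑ k ∈ range n, b ^ k) / b ^ n := by
  induction n with
  | zero => simp
  | succ n ih =>
    rw [sum_Icc_succ_top (by omega), ih, geom_sum_succ]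
    field_simp
    ring

theorem oneShot_homogeneous_identities_general {d : ℕ}
    (A B : Matrix (Fin d) (Fin d) ℝ) (hB : IsUnit B.det)
    (a : ℝ) (ha : a ≠ 0)
    (hcond : A * (B * Bᵀ) * Aᵀ = a ^ 2 • (B * Bᵀ))
    (n : ℕ) (Δz : Fin d → ℝ)
    (Gram : Matrix (Fin d) (Fin d) ℝ)
    (hGram : Gram = ∑ k ∈ Finset.range n, A ^ k * (B * Bᵀ) * (Aᵀ) ^ k)
    (hpos : Gram.PosDef) :
    Gram = (∑ k ∈ Finset.range n, a ^ (2 * k)) • (B * Bᵀ) ∧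
      (∑ i, ((((hpos.posSemidef.1.eigenvectorUnitary : Matrix (Fin d) (Fin d) ℝ) *
          diagonal ((RCLike.ofReal : ℝ → ℝ) ∘ (√·) ∘ hpos.posSemidef.1.eigenvalues) *
          (star hpos.posSemidef.1.eigenvectorUnitary : Matrix (Fin d) (Fin d) ℝ))⁻¹.mulVec ((A ^ n).mulVec Δz)) i) ^ 2 =
        (∑ k ∈ Finset.Icc 1 n, a ^ (-(2 * (k : ℤ))))⁻¹ *
          ∑ i, ((B⁻¹.mulVec Δz) i) ^ 2) ∧
      (Δz ≠ 0 →
        ∑ k ∈ Finset.Icc 1 n, (∑ i, ((B⁻¹.mulVec ((A ^ k).mulVec Δz)) i) ^ 2)⁻¹ =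
          (∑ i, ((B⁻¹.mulVec Δz) i) ^ 2)⁻¹ *
            ∑ k ∈ Finset.Icc 1 n, a ^ (-(2 * (k : ℤ)))) := by
  have ha2 : a ^ 2 ≠ 0 := pow_ne_zero 2 ha
  have hGram_smul : Gram = (∑ k ∈ range n, a ^ (2 * k)) • (B * Bᵀ) := by
    rw [hGram, sum_smul]
    exact sum_congr rfl fun k _ => by rw [pow_mul_mul_transpose_pow hcond, pow_mul]
  have hsqrt := hpos.posSemidef.cfc_sqrt_mul_transpose
  rw [hpos.posSemidef.1.cfc_eq, IsHermitian.cfc, Unitary.conjStarAlgAut_apply] at hsqrt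
  have hzpow (k : ℕ) : a ^ (-(2 * (k : ℤ))) = ((a ^ 2) ^ k)⁻¹ := by
    rw [_root_.zpow_neg, ← pow_mul]; norm_cast
  have hscale := sum_sq_inv_mulVec_pow_mulVec hB ha2 hcond
  simp only [hzpow]
  refine ⟨hGram_smul, ?_, fun _ => ?_⟩
  · rw [sum_sq_inv_mulVec hsqrt, hGram_smul,
      inv_smul_of_isUnit_det (isUnit_det_mul_transpose hB), smul_mulVec, dotProduct_smul,
      smul_eq_mul, ← sum_sq_inv_mulVec rfl, hscale, sum_Icc_inv_pow ha2, inv_div]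
    simp only [pow_mul]
    ring
  · rw [mul_sum]
    exact sum_congr rfl fun k _ => by rw [hscale, mul_inv, mul_comm]

theorem oneShot_homogeneous_identities {d : ℕ} (hd : 1 ≤ d)
    (A B : Matrix (Fin d) (Fin d) ℝ) (hA : IsUnit A.det) (hB : IsUnit B.det)
    (a : ℝ) (ha : a ≠ 0)
    (hcond : A * (B * Bᵀ) * Aᵀ = a ^ 2 • (B * Bᵀ))
    (n : ℕ) (hn : 1 ≤ n) (Δz : Fin d → ℝ)
    (Gram : Matrix (Fin d) (Fin d) ℝ)
    (hGram : Gram = ∑ k ∈ Finset.range n, A ^ k * (B * Bᵀ) * (Aᵀ) ^ k)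
    (hpos : Gram.PosDef) :
    Gram = (∑ k ∈ Finset.range n, a ^ (2 * k)) • (B * Bᵀ) ∧
      (∑ i, ((((hpos.posSemidef.1.eigenvectorUnitary : Matrix (Fin d) (Fin d) ℝ) *
          diagonal ((RCLike.ofReal : ℝ → ℝ) ∘ (√·) ∘ hpos.posSemidef.1.eigenvalues) *
          (star hpos.posSemidef.1.eigenvectorUnitary : Matrix (Fin d) (Fin d) ℝ))⁻¹.mulVec ((A ^ n).mulVec Δz)) i) ^ 2 =
        (∑ k ∈ Finset.Icc 1 n, a ^ (-(2 * (k : ℤ))))⁻¹ *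
          ∑ i, ((B⁻¹.mulVec Δz) i) ^ 2) ∧
      (Δz ≠ 0 →
        ∑ k ∈ Finset.Icc 1 n, (∑ i, ((B⁻¹.mulVec ((A ^ k).mulVec Δz)) i) ^ 2)⁻¹ =
          (∑ i, ((B⁻¹.mulVec Δz) i) ^ 2)⁻¹ *
            ∑ k ∈ Finset.Icc 1 n, a ^ (-(2 * (k : ℤ)))) :=
  oneShot_homogeneous_identities_general A B hB a ha hcond n Δz Gram hGram hpos
end
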